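/- Let A be a real m×d matrix, y ∈ ℝ^m, α > 0 and t ∈ (0,1). Let σ_m, σ_M ≥ 0 satisfy σ_m‖z‖₂ ≤ ‖A z‖₂ ≤ σ_M‖z‖₂ for all z ∈ ℝ^d, set θ = (σ_m² + σ_M²)/2, and define T_t(z) = (θ t + (1−t)α)⁻¹ · S_{1−t}( t(θ I − AᵀA) z + t Aᵀ y ). Then the unique minimizer z^t of the functional F_t(z) = t‖A z − y‖₂² + (1−t)(‖z‖₁ + α‖z‖₂²) over ℝ^d satisfies z^t = T_t(z^t). -/

import Mathlib

/-!
Minimality of `F_t` along the `i`-th coordinate line gives the first-order condition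
`-∂ᵢG(z) ∈ (1 - t) ∂|zᵢ|` for the smooth part `G(z) = t‖Az - y‖² + (1 - t)α‖z‖²`, whose partial
derivative is `2t(Aᵀ(Az - y))ᵢ + 2(1 - t)αzᵢ`. Adding `2θtzᵢ` to both sides and writing
`c = θt + (1 - t)α > 0`, this reads `2(u - czᵢ) ∈ (1 - t) ∂|zᵢ|` with `u` the argument of `S_{1-t}`
in `T_t(z)`, and that inclusion forces `zᵢ = c⁻¹ S_{1-t}(u)`.
-/

open Matrix

noncomputable def softThreshold (τ u : ℝ) : ℝ := Real.sign u * max (|u| - τ / 2) 0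

/-- `w ∈ ∂(τ |·|)(s)`, for `τ ≥ 0`. -/
def IsSubgradientAbs (τ w s : ℝ) : Prop := |w| ≤ τ ∧ w * s = τ * |s|

theorem eq_inv_mul_softThreshold_of_isSubgradientAbs {c τ u s : ℝ} (hc : 0 < c)
    (h : IsSubgradientAbs τ (2 * (u - c * s)) s) : s = c⁻¹ * softThreshold τ u := by
  obtain ⟨hle, hmul⟩ := h
  rw [eq_inv_mul_iff_mul_eq₀ hc.ne', softThreshold]
  rcases lt_trichotomy s 0 with hs | rfl | hs
  · have hu : u = c * s - τ / 2 := by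
      rw [abs_of_neg hs] at hmul; nlinarith
    have hu0 : u < 0 := by nlinarith [abs_nonneg (2 * (u - c * s))]
    rw [Real.sign_of_neg hu0, abs_of_neg hu0, max_eq_left (by nlinarith)]
    linarith
  · simp only [mul_zero, sub_zero, abs_mul, abs_two] at hle
    rw [max_eq_right (by linarith)]
    simp
  · have hu : u = c * s + τ / 2 := by
      rw [abs_of_pos hs] at hmul; nlinarith
    have hu0 : 0 < u := by nlinarith [abs_nonneg (2 * (u - c * s))]
    rw [Real.sign_of_pos hu0, abs_of_pos hu0, max_eq_left (by nlinarith)]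
    linarith

theorem HasDerivAt.nonneg_of_forall_gt_le {p : ℝ → ℝ} {k a : ℝ} (hp : HasDerivAt p k a)
    (hmin : ∀ s, a < s → p a ≤ p s) : 0 ≤ k := by
  refine ge_of_tendsto hp.tendsto_slope_zero_right ?_
  filter_upwards [self_mem_nhdsWithin] with h (hh : 0 < h)
  exact smul_nonneg (inv_nonneg.2 hh.le) (sub_nonneg.2 (hmin _ (lt_add_of_pos_right a hh)))

theorem HasDerivAt.nonpos_of_forall_lt_le {p : ℝ → ℝ} {k a : ℝ} (hp : HasDerivAt p k a)
    (hmin : ∀ s, s < a → p a ≤ p s) : k ≤ 0 := by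
  refine le_of_tendsto hp.tendsto_slope_zero_left ?_
  filter_upwards [self_mem_nhdsWithin] with h (hh : h < 0)
  exact smul_nonpos_of_nonpos_of_nonneg (inv_nonpos.2 hh.le)
    (sub_nonneg.2 (hmin _ (add_lt_of_neg_right a hh)))

theorem HasDerivAt.isSubgradientAbs_neg {q : ℝ → ℝ} {k τ s₀ : ℝ} (hq : HasDerivAt q k s₀)
    (hmin : ∀ s, q s₀ + τ * |s₀| ≤ q s + τ * |s|) (hτ : 0 ≤ τ) :
    IsSubgradientAbs τ (-k) s₀ := by
  have hright : 0 ≤ k + τ := by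
    have hp := hq.add ((hasDerivAt_id' s₀).const_mul τ |>.congr_deriv (mul_one τ))
    refine hp.nonneg_of_forall_gt_le fun s hs => ?_
    have := abs_sub_abs_le_abs_sub s s₀
    rw [abs_of_pos (sub_pos.2 hs)] at this
    show q s₀ + τ * s₀ ≤ q s + τ * s
    nlinarith [hmin s]
  have hleft : k - τ ≤ 0 := by
    have hp := hq.sub ((hasDerivAt_id' s₀).const_mul τ |>.congr_deriv (mul_one τ))
    refine hp.nonpos_of_forall_lt_le fun s hs => ?_
    have := abs_sub_abs_le_abs_sub s s₀
    rw [abs_of_neg (sub_neg.2 hs)] at this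
    show q s₀ - τ * s₀ ≤ q s - τ * s
    nlinarith [hmin s]
  -- along the ray `r ↦ r * s₀` the penalty is linear, so `r = 1` is an interior minimum
  have hradial : k * s₀ + τ * |s₀| = 0 := by
    have hr : HasDerivAt (fun r => q (r * s₀) + τ * (r * |s₀|)) (k * s₀ + τ * |s₀|) 1 :=
      (hq.comp_of_eq 1 (hasDerivAt_mul_const s₀) (one_mul s₀).symm).add
        ((hasDerivAt_mul_const |s₀|).const_mul τ)
    refine IsLocalMin.hasDerivAt_eq_zero ?_ hr
    filter_upwards [Ioi_mem_nhds one_pos] with r (hr : 0 < r)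
    have := hmin (r * s₀)
    rw [abs_mul, abs_of_pos hr] at this
    simpa using this
  exact ⟨abs_le.2 ⟨by linarith, by linarith⟩, by linarith⟩

theorem hasDerivAt_norm_add_sub_smul_sq {E : Type*} [NormedAddCommGroup E] [InnerProductSpace ℝ E]
    (v w : E) (a : ℝ) : HasDerivAt (fun s => ‖v + (s - a) • w‖ ^ 2) (2 * inner ℝ v w) a := by
  simpa using (((hasDerivAt_id a).sub_const a).smul_const w |>.const_add v).norm_sq

section Coordinatewise

variable {ι : Type*} [Fintype ι] [DecidableEq ι]

theorem sum_apply_add_smul_single (f : ℝ → ℝ) (z : EuclideanSpace ℝ ι) (i : ι) (a : ℝ) :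
    ∑ j, f ((z + a • EuclideanSpace.single i 1 : EuclideanSpace ℝ ι) j)
      = ∑ j, f (z j) - f (z i) + f (z i + a) := by
  have h : ∑ j, (f ((z + a • EuclideanSpace.single i 1 : EuclideanSpace ℝ ι) j) - f (z j))
      = f (z i + a) - f (z i) := by
    rw [Finset.sum_eq_single i (fun j _ hj => by simp [hj]) (by simp)]
    simp
  rw [Finset.sum_sub_distrib] at h
  linarith

theorem isSubgradientAbs_of_forall_add_sum_abs_le {G : EuclideanSpace ℝ ι → ℝ} {τ k : ℝ}
    {z : EuclideanSpace ℝ ι} {i : ι} (hτ : 0 ≤ τ)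
    (hmin : ∀ w, G z + τ * ∑ j, |z j| ≤ G w + τ * ∑ j, |w j|)
    (hG : HasDerivAt (fun s => G (z + (s - z i) • EuclideanSpace.single i 1)) k (z i)) :
    IsSubgradientAbs τ (-k) (z i) := by
  refine (hG.add_const (τ * (∑ j, |z j| - |z i|))).isSubgradientAbs_neg (fun s => ?_) hτ
  have h := hmin (z + (s - z i) • EuclideanSpace.single i 1)
  rw [sum_apply_add_smul_single, add_sub_cancel] at h
  simp only [sub_self, zero_smul, add_zero]
  linarith

theorem inner_toEuclideanLin_single {m : Type*} [Fintype m] (A : Matrix m ι ℝ)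
    (v : EuclideanSpace ℝ m) (i : ι) :
    inner ℝ v (toEuclideanLin A (EuclideanSpace.single i 1)) = (Aᵀ *ᵥ v) i := by
  simp [EuclideanSpace.inner_eq_star_dotProduct, mulVec, dotProduct, Pi.single_apply]

end Coordinatewise

theorem elasticNet_minimizer_is_fixed_point_general {m d : ℕ}
    (A : Matrix (Fin m) (Fin d) ℝ) (y : EuclideanSpace ℝ (Fin m))
    (α t σm σM : ℝ) (hα : 0 < α) (ht0 : 0 < t) (ht1 : t < 1)
    (θ : ℝ) (hθ : θ = (σm ^ 2 + σM ^ 2) / 2)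
    (T : EuclideanSpace ℝ (Fin d) → EuclideanSpace ℝ (Fin d))
    (hT : ∀ z i, T z i = (θ * t + (1 - t) * α)⁻¹ *
      (Real.sign (t * (θ * z i - (Aᵀ * A).mulVec (fun k => z k) i) + t * Aᵀ.mulVec (fun k => y k) i) *
        max (|t * (θ * z i - (Aᵀ * A).mulVec (fun k => z k) i) + t * Aᵀ.mulVec (fun k => y k) i| - (1 - t) / 2) 0))
    (F : EuclideanSpace ℝ (Fin d) → ℝ)
    (hF : ∀ z, F z = t * ‖Matrix.toEuclideanLin A z - y‖ ^ 2 +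
      (1 - t) * ((∑ i, |z i|) + α * ‖z‖ ^ 2))
    (zt : EuclideanSpace ℝ (Fin d)) (hzt : ∀ z, F zt ≤ F z) :
    zt = T zt := by
  ext i
  have hc : 0 < θ * t + (1 - t) * α := by
    have hθ0 : 0 ≤ θ := hθ ▸ by positivity
    exact add_pos_of_nonneg_of_pos (mul_nonneg hθ0 ht0.le) (mul_pos (sub_pos.2 ht1) hα)
  set G : EuclideanSpace ℝ (Fin d) → ℝ :=
    fun z => t * ‖toEuclideanLin A z - y‖ ^ 2 + (1 - t) * α * ‖z‖ ^ 2
  have hGF : ∀ z, F z = G z + (1 - t) * ∑ j, |z j| := fun z => by rw [hF]; ring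
  have hGline : HasDerivAt (fun s => G (zt + (s - zt i) • EuclideanSpace.single i 1))
      (t * (2 * inner ℝ (toEuclideanLin A zt - y) (toEuclideanLin A (EuclideanSpace.single i 1)))
        + (1 - t) * α * (2 * inner ℝ zt (EuclideanSpace.single i 1))) (zt i) := by
    have hline : (fun s => G (zt + (s - zt i) • EuclideanSpace.single i 1)) = fun s =>
        t * ‖(toEuclideanLin A zt - y)
            + (s - zt i) • toEuclideanLin A (EuclideanSpace.single i 1)‖ ^ 2
          + (1 - t) * α * ‖zt + (s - zt i) • EuclideanSpace.single i 1‖ ^ 2 := by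
      funext s
      simp only [G, map_add, map_smul, add_sub_right_comm]
    rw [hline]
    exact ((hasDerivAt_norm_add_sub_smul_sq _ _ (zt i)).const_mul t).add
      ((hasDerivAt_norm_add_sub_smul_sq _ _ (zt i)).const_mul ((1 - t) * α))
  have hopt := isSubgradientAbs_of_forall_add_sum_abs_le (sub_nonneg.2 ht1.le)
    (fun w => by rw [← hGF, ← hGF]; exact hzt w) hGline
  rw [hT]
  refine eq_inv_mul_softThreshold_of_isSubgradientAbs hc ?_
  convert hopt using 1
  rw [inner_toEuclideanLin_single, EuclideanSpace.inner_single_right]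
  simp only [toLpLin_apply, WithLp.ofLp_sub, mulVec_sub, mulVec_mulVec, Pi.sub_apply,
    Real.ringHom_apply, one_mul, neg_add_rev]
  ring

/-- Lemma 2.6 (fixed point): the unique minimizer `z^t` of the elastic net functional
`F_t z = t‖Az - y‖₂² + (1-t)(‖z‖₁ + α‖z‖₂²)` satisfies `z^t = T_t(z^t)` with
`T_t(z) = (θt + (1-t)α)⁻¹ S_{1-t}(t(θI - AᵀA)z + tAᵀy)`. -/
theorem elasticNet_minimizer_is_fixed_point {m d : ℕ}
    (A : Matrix (Fin m) (Fin d) ℝ) (y : EuclideanSpace ℝ (Fin m))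
    (α t σm σM : ℝ) (hα : 0 < α) (ht0 : 0 < t) (ht1 : t < 1)
    (hσm : 0 ≤ σm) (hσM : 0 ≤ σM)
    (hlow : ∀ z : EuclideanSpace ℝ (Fin d), σm * ‖z‖ ≤ ‖Matrix.toEuclideanLin A z‖)
    (hhigh : ∀ z : EuclideanSpace ℝ (Fin d), ‖Matrix.toEuclideanLin A z‖ ≤ σM * ‖z‖)
    (θ : ℝ) (hθ : θ = (σm ^ 2 + σM ^ 2) / 2)
    (T : EuclideanSpace ℝ (Fin d) → EuclideanSpace ℝ (Fin d))
    (hT : ∀ z i, T z i = (θ * t + (1 - t) * α)⁻¹ *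
      (Real.sign (t * (θ * z i - (Aᵀ * A).mulVec (fun k => z k) i) + t * Aᵀ.mulVec (fun k => y k) i) *
        max (|t * (θ * z i - (Aᵀ * A).mulVec (fun k => z k) i) + t * Aᵀ.mulVec (fun k => y k) i| - (1 - t) / 2) 0))
    (F : EuclideanSpace ℝ (Fin d) → ℝ)
    (hF : ∀ z, F z = t * ‖Matrix.toEuclideanLin A z - y‖ ^ 2 +
      (1 - t) * ((∑ i, |z i|) + α * ‖z‖ ^ 2))
    (zt : EuclideanSpace ℝ (Fin d)) (hzt : ∀ z, F zt ≤ F z) :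
    zt = T zt :=
  elasticNet_minimizer_is_fixed_point_general A y α t σm σM hα ht0 ht1 θ hθ T hT F hF zt hzt
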